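/- arXiv:2001.10786 — 2 statements merged into one kernel-verified Lean document; each statement's English description precedes it below -/
import Mathlib

section
/- (Robbins–Siegmund) Let {F_n} be a filtration and let v_n, a_n, b_n, c_n be nonnegative random variables adapted to F_n satisfying E[v_{n+1} | F_n] ≤ v_n(1 + a_n) + b_n − c_n for all n. If ∑ a_n < ∞ and ∑ b_n < ∞ almost surely, then almost surely the sequence {v_n} converges and ∑ c_n < ∞. -/
/-!
Put `D n = ∏_{k<n} (1 + a_k⁺)`. Dividing the recursion by `D (n+1)` shows that
`u n = v n / D n + ∑_{k<n} (c k - b k) / D (k+1)` is a supermartingale. It is bounded below by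
the predictable process `-B n = -∑_{k<n} b k / D (k+1)`, so stopping `u` just before `B` first
exceeds `r` gives a supermartingale bounded below by `-r`, which converges a.s.; where `∑ b < ∞`,
`B` never exceeds some `r ∈ ℕ`, so `u` itself converges there. Finally `∑ a < ∞` makes `D`
converge to a finite limit `≥ 1`, and the convergence of `u` and `B` yields that of `v n / D n`
plus the nondecreasing `∑_{k<n} c k / D (k+1)`, hence of `v` and of `∑ c`.
-/

open MeasureTheory Filter
open scoped Topology

namespace MeasureTheory

variable {Ω : Type*} {m0 : MeasurableSpace Ω} {μ : Measure Ω} {ℱ : Filtration ℕ m0}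

lemma stoppedProcess_hittingAfter_succ_le {B : ℕ → Ω → ℝ} {r : ℝ} {ω : Ω} (hB0 : B 0 ω ≤ r)
    (n : ℕ) : stoppedProcess B (hittingAfter (fun k => B (k + 1)) (Set.Ioi r) 0) n ω ≤ r := by
  set τ := hittingAfter (fun k => B (k + 1)) (Set.Ioi r) 0
  have hne : min (n : WithTop ℕ) (τ ω) ≠ ⊤ := ne_top_of_le_ne_top (by simp) (min_le_left _ _)
  rw [stoppedProcess]
  generalize hk : (min (n : WithTop ℕ) (τ ω)).untopA = k
  rcases k with _ | j
  · exact hB0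
  · rw [WithTop.untopA_eq_untop hne, WithTop.untop_eq_iff] at hk
    have hj : (j : WithTop ℕ) < τ ω :=
      (WithTop.coe_lt_coe.2 j.lt_succ_self).trans_le (hk ▸ min_le_right _ _)
    simpa using notMem_of_lt_hittingAfter hj (Nat.zero_le j)

theorem Supermartingale.exists_ae_tendsto_of_forall_le [IsFiniteMeasure μ] {f : ℕ → Ω → ℝ}
    (hf : Supermartingale f ℱ μ) {R : ℝ} (hR : ∀ n, ∀ᵐ ω ∂μ, R ≤ f n ω) :
    ∀ᵐ ω ∂μ, ∃ l, Tendsto (fun n => f n ω) atTop (𝓝 l) := by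
  set K := ∫ ω, f 0 ω ∂μ + 2 * |R| * μ.real Set.univ
  have hL1 : ∀ n, ∫ ω, ‖f n ω‖ ∂μ ≤ K := fun n => calc
    ∫ ω, ‖f n ω‖ ∂μ ≤ ∫ ω, (f n ω + 2 * |R|) ∂μ := by
      refine integral_mono_ae (hf.integrable n).norm ((hf.integrable n).add (integrable_const _)) ?_
      filter_upwards [hR n] with ω hω
      rw [Real.norm_eq_abs, abs_le]
      constructor <;> linarith [neg_abs_le R, le_abs_self R]
    _ = ∫ ω, f n ω ∂μ + 2 * |R| * μ.real Set.univ := by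
      rw [integral_add (hf.integrable n) (integrable_const _), integral_const, smul_eq_mul,
        mul_comm]
    _ ≤ K := by
      have := hf.setIntegral_le (Nat.zero_le n) MeasurableSet.univ
      rw [setIntegral_univ, setIntegral_univ] at this
      linarith
  have hbdd : ∀ n, eLpNorm ((-f) n) 1 μ ≤ K.toNNReal := fun n => by
    rw [Pi.neg_apply, eLpNorm_neg, eLpNorm_one_eq_lintegral_enorm,
      ← ofReal_integral_norm_eq_lintegral_enorm (hf.integrable n)]
    exact ENNReal.ofReal_le_ofReal (hL1 n)
  filter_upwards [hf.neg.exists_ae_tendsto_of_bdd hbdd] with ω ⟨l, hl⟩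
  exact ⟨-l, by simpa using hl.neg⟩

protected lemma Supermartingale.stoppedProcess [SigmaFiniteFiltration μ ℱ] {f : ℕ → Ω → ℝ}
    (hf : Supermartingale f ℱ μ) {τ : Ω → ℕ∞} (hτ : IsStoppingTime ℱ τ) :
    Supermartingale (stoppedProcess f τ) ℱ μ := by
  have h : -(stoppedProcess (-f) τ) = stoppedProcess f τ := by
    ext n ω
    simp [stoppedProcess]
  exact h ▸ (hf.neg.stoppedProcess hτ).neg

theorem Supermartingale.ae_exists_tendsto_of_bddAbove [IsFiniteMeasure μ] {u B : ℕ → Ω → ℝ}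
    (hu : Supermartingale u ℱ μ) (hB : Adapted ℱ fun n => B (n + 1)) (hB0 : B 0 = 0)
    (hle : ∀ n, ∀ᵐ ω ∂μ, -B n ω ≤ u n ω) :
    ∀ᵐ ω ∂μ, BddAbove (Set.range fun n => B n ω) →
      ∃ l, Tendsto (fun n => u n ω) atTop (𝓝 l) := by
  have hstopped (r : ℕ) : ∀ᵐ ω ∂μ, ∃ l, Tendsto
      (fun n => stoppedProcess u (hittingAfter (fun k => B (k + 1)) (Set.Ioi (r : ℝ)) 0) n ω)
      atTop (𝓝 l) := by
    have hτ := hB.isStoppingTime_hittingAfter (n := 0) (measurableSet_Ioi (a := (r : ℝ)))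
    refine (hu.stoppedProcess hτ).exists_ae_tendsto_of_forall_le (R := -r) fun n => ?_
    filter_upwards [ae_all_iff.2 hle] with ω hω
    exact (neg_le_neg (stoppedProcess_hittingAfter_succ_le (by simp [hB0]) n)).trans (hω _)
  filter_upwards [ae_all_iff.2 hstopped] with ω hω ⟨K, hK⟩
  obtain ⟨r, hr⟩ := exists_nat_ge K
  have hτ : hittingAfter (fun k => B (k + 1)) (Set.Ioi (r : ℝ)) 0 ω = ⊤ :=
    hittingAfter_eq_top_iff.2 fun j _ => not_lt.2 ((hK ⟨j + 1, rfl⟩).trans hr)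
  obtain ⟨l, hl⟩ := hω r
  exact ⟨l, hl.congr fun n => stoppedProcess_eq_of_le (hτ ▸ le_top)⟩

end MeasureTheory

namespace RobbinsSiegmund

open Finset

/-- The positive part keeps `discount a ≥ 1` for arbitrary `a`; this costs nothing in the
recursion since `v ≥ 0`. -/
def discount (a : ℕ → ℝ) (n : ℕ) : ℝ := ∏ k ∈ range n, (1 + max (a k) 0)

noncomputable def discountedSum (a b : ℕ → ℝ) (n : ℕ) : ℝ :=
  ∑ k ∈ range n, b k / discount a (k + 1)

noncomputable def normalized (v a b c : ℕ → ℝ) (n : ℕ) : ℝ :=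
  v n / discount a n + discountedSum a c n - discountedSum a b n

variable {a : ℕ → ℝ}

lemma discount_succ (n : ℕ) : discount a (n + 1) = discount a n * (1 + max (a n) 0) :=
  prod_range_succ _ _

lemma one_le_discount (n : ℕ) : 1 ≤ discount a n :=
  one_le_prod fun _ _ => le_add_of_nonneg_right (le_max_right _ _)

lemma discount_pos (n : ℕ) : 0 < discount a n := one_pos.trans_le (one_le_discount n)

lemma monotone_discount : Monotone (discount a) :=
  monotone_nat_of_le_succ fun n => by
    rw [discount_succ]
    exact le_mul_of_one_le_right (discount_pos n).le (le_add_of_nonneg_right (le_max_right _ _))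

lemma abs_div_discount_le (x : ℝ) (n : ℕ) : |x / discount a n| ≤ |x| := by
  rw [abs_div, abs_of_pos (discount_pos n)]
  exact div_le_self (abs_nonneg x) (one_le_discount n)

lemma tendsto_discount (ha : Summable a) :
    Tendsto (discount a) atTop (𝓝 (∏' k, (1 + max (a k) 0))) :=
  (Real.multipliable_one_add_of_summable <|
    ha.abs.of_nonneg_of_le (fun _ => le_max_right _ _)
      fun _ => max_le (le_abs_self _) (abs_nonneg _)).tendsto_prod_tprod_nat

lemma summable_div_discount {b : ℕ → ℝ} (hb : Summable b) :
    Summable fun k => b k / discount a (k + 1) :=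
  hb.abs.of_norm_bounded fun _ => abs_div_discount_le _ _

lemma tendsto_discountedSum {b : ℕ → ℝ} (hb : Summable fun k => b k / discount a (k + 1)) :
    Tendsto (discountedSum a b) atTop (𝓝 (∑' k, b k / discount a (k + 1))) :=
  hb.hasSum.tendsto_sum_nat

lemma discountedSum_succ (b : ℕ → ℝ) (n : ℕ) :
    discountedSum a b (n + 1) = discountedSum a b n + b n / discount a (n + 1) :=
  sum_range_succ _ _

lemma discountedSum_nonneg {b : ℕ → ℝ} (hb : 0 ≤ b) (n : ℕ) : 0 ≤ discountedSum a b n :=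
  sum_nonneg fun k _ => div_nonneg (hb k) (discount_pos _).le

lemma normalized_succ_le {v b c : ℕ → ℝ} {n : ℕ} {x : ℝ} (hv : 0 ≤ v n)
    (hx : x ≤ v n * (1 + a n) + b n - c n) :
    x / discount a (n + 1) + discountedSum a c (n + 1) - discountedSum a b (n + 1) ≤
      normalized v a b c n := by
  have hx' : x ≤ v n * (1 + max (a n) 0) + b n - c n :=
    hx.trans (by gcongr; exact le_max_left _ _)
  have hv_div : v n / discount a n = v n * (1 + max (a n) 0) / discount a (n + 1) := by
    rw [discount_succ, mul_div_mul_right _ _ (by positivity)]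
  have := div_le_div_of_nonneg_right hx' (discount_pos (a := a) (n + 1)).le
  rw [sub_div, add_div] at this
  rw [normalized, discountedSum_succ, discountedSum_succ, hv_div]
  linarith

lemma neg_discountedSum_le_normalized {v b c : ℕ → ℝ} {n : ℕ} (hv : 0 ≤ v n) (hc : 0 ≤ c) :
    -discountedSum a b n ≤ normalized v a b c n := by
  rw [normalized]
  linarith [div_nonneg hv (discount_pos (a := a) n).le, discountedSum_nonneg (a := a) hc n]

lemma summable_of_summable_div_discount (ha : Summable a) {c : ℕ → ℝ} (hc : 0 ≤ c)
    (h : Summable fun k => c k / discount a (k + 1)) : Summable c := by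
  refine (h.mul_left (∏' k, (1 + max (a k) 0))).of_nonneg_of_le hc fun k => ?_
  have hD := (monotone_discount.ge_of_tendsto (tendsto_discount ha)) (k + 1)
  rw [mul_div, le_div_iff₀ (discount_pos _), mul_comm (c k)]
  exact mul_le_mul_of_nonneg_right hD (hc k)

theorem exists_tendsto_and_summable_of_tendsto_normalized {v b c : ℕ → ℝ} (hv : 0 ≤ v)
    (hc : 0 ≤ c) (ha : Summable a) (hb : Summable b) {l : ℝ}
    (hu : Tendsto (normalized v a b c) atTop (𝓝 l)) :
    (∃ l, Tendsto v atTop (𝓝 l)) ∧ Summable c := by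
  have hvC : Tendsto (fun n => v n / discount a n + discountedSum a c n) atTop
      (𝓝 (l + ∑' k, b k / discount a (k + 1))) :=
    (hu.add (tendsto_discountedSum (summable_div_discount hb))).congr fun n => by
      rw [normalized]; ring
  obtain ⟨K, hK⟩ := hvC.bddAbove_range
  have hc_sum : Summable fun k => c k / discount a (k + 1) :=
    summable_of_sum_range_le (fun k => div_nonneg (hc k) (discount_pos _).le) fun n =>
      (le_add_of_nonneg_left (div_nonneg (hv n) (discount_pos n).le)).trans (hK ⟨n, rfl⟩)
  refine ⟨⟨_, ((hvC.sub (tendsto_discountedSum hc_sum)).mul (tendsto_discount ha)).congr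
    fun n => ?_⟩, summable_of_summable_div_discount ha hc hc_sum⟩
  simp only [add_sub_cancel_right]
  exact div_mul_cancel₀ _ (discount_pos n).ne'

variable {Ω : Type*} {m0 : MeasurableSpace Ω} {μ : Measure Ω} {ℱ : Filtration ℕ m0}
  {a : ℕ → Ω → ℝ}

lemma measurable_discount (ha : Adapted ℱ a) {n N : ℕ} (hn : n ≤ N + 1) :
    Measurable[ℱ N] fun ω => discount (a · ω) n :=
  Finset.measurable_prod _ fun k hk => measurable_const.add <|
    ((ha k).mono (ℱ.mono (by simp only [mem_range] at hk; omega)) le_rfl).max measurable_const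

lemma measurable_discountedSum (ha : Adapted ℱ a) {b : ℕ → Ω → ℝ} (hb : Adapted ℱ b) {n N : ℕ}
    (hn : n ≤ N + 1) : Measurable[ℱ N] fun ω => discountedSum (a · ω) (b · ω) n :=
  Finset.measurable_sum _ fun k hk => have hk : k ≤ N := by simp only [mem_range] at hk; omega
    ((hb k).mono (ℱ.mono hk) le_rfl).div (measurable_discount ha (by omega))

lemma integrable_div_discount (ha : Adapted ℱ a) {f : Ω → ℝ} (hf : Integrable f μ) (n : ℕ) :
    Integrable (fun ω => f ω / discount (a · ω) n) μ :=
  hf.mono (hf.1.aemeasurable.div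
      ((measurable_discount ha n.le_succ).mono (ℱ.le n) le_rfl).aemeasurable).aestronglyMeasurable
    (ae_of_all _ fun _ => abs_div_discount_le _ _)

lemma integrable_discountedSum (ha : Adapted ℱ a) {b : ℕ → Ω → ℝ}
    (hb : ∀ n, Integrable (b n) μ) (n : ℕ) :
    Integrable (fun ω => discountedSum (a · ω) (b · ω) n) μ :=
  integrable_finsetSum _ fun k _ => integrable_div_discount ha (hb k) (k + 1)

theorem supermartingale_normalized [IsFiniteMeasure μ] {v b c : ℕ → Ω → ℝ}
    (hv : Adapted ℱ v) (ha : Adapted ℱ a) (hb : Adapted ℱ b) (hc : Adapted ℱ c)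
    (hv_int : ∀ n, Integrable (v n) μ) (hb_int : ∀ n, Integrable (b n) μ)
    (hc_int : ∀ n, Integrable (c n) μ) (hv_nonneg : ∀ n, 0 ≤ᵐ[μ] v n)
    (hineq : ∀ n, μ[v (n + 1) | ℱ n] ≤ᵐ[μ] fun ω => v n ω * (1 + a n ω) + b n ω - c n ω) :
    Supermartingale (fun n ω => normalized (v · ω) (a · ω) (b · ω) (c · ω) n) ℱ μ := by
  set D : ℕ → Ω → ℝ := fun n ω => discount (a · ω) n
  set S : ℕ → Ω → ℝ := fun n ω =>
    discountedSum (a · ω) (c · ω) n - discountedSum (a · ω) (b · ω) n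
  have hS_meas {n N : ℕ} (hn : n ≤ N + 1) : Measurable[ℱ N] (S n) :=
    (measurable_discountedSum ha hc hn).sub (measurable_discountedSum ha hb hn)
  have hS_int (n : ℕ) : Integrable (S n) μ :=
    (integrable_discountedSum ha hc_int n).sub (integrable_discountedSum ha hb_int n)
  have hsplit (n : ℕ) :
      (fun ω => normalized (v · ω) (a · ω) (b · ω) (c · ω) n) = v n / D n + S n := by
    ext ω
    simp only [normalized, Pi.add_apply, Pi.div_apply, add_sub_assoc, D, S]
  refine supermartingale_nat (fun n => ?_) (fun n => ?_) fun n => ?_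
  · rw [hsplit]
    exact ((hv n).div (measurable_discount ha n.le_succ)).add
      (hS_meas n.le_succ) |>.stronglyMeasurable
  · rw [hsplit]
    exact (integrable_div_discount ha (hv_int n) n).add (hS_int n)
  have hvD : Integrable (v (n + 1) / D (n + 1)) μ := integrable_div_discount ha (hv_int (n + 1)) _
  have hcond : μ[v (n + 1) / D (n + 1) + S (n + 1) | ℱ n] =ᵐ[μ]
      μ[v (n + 1) | ℱ n] / D (n + 1) + S (n + 1) := by
    have hmul : μ[v (n + 1) / D (n + 1) | ℱ n] =ᵐ[μ] μ[v (n + 1) | ℱ n] / D (n + 1) := by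
      simpa only [div_eq_mul_inv] using condExp_mul_of_aestronglyMeasurable_right
        (measurable_discount ha le_rfl).inv.aestronglyMeasurable
        (by simpa only [div_eq_mul_inv] using hvD) (hv_int (n + 1))
    filter_upwards [condExp_add hvD (hS_int (n + 1)) (ℱ n), hmul] with ω h_add h_mul
    rw [h_add, Pi.add_apply, h_mul, condExp_of_stronglyMeasurable (ℱ.le n)
      (hS_meas le_rfl).stronglyMeasurable (hS_int (n + 1))]
    rfl
  rw [hsplit]
  filter_upwards [hcond, hineq n, hv_nonneg n] with ω h_cond h_ineq h_v
  rw [h_cond]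
  simpa only [Pi.add_apply, Pi.div_apply, S, ← add_sub_assoc] using normalized_succ_le h_v h_ineq

end RobbinsSiegmund

open RobbinsSiegmund

theorem stmt2_general {Ω : Type*} {m : MeasurableSpace Ω} {μ : Measure Ω} [IsProbabilityMeasure μ]
    (ℱ : Filtration ℕ m) (v a b c : ℕ → Ω → ℝ)
    (hv_nonneg : ∀ n, 0 ≤ᵐ[μ] v n)
    (hc_nonneg : ∀ n, 0 ≤ᵐ[μ] c n)
    (hv_adapted : Adapted ℱ v) (ha_adapted : Adapted ℱ a)
    (hb_adapted : Adapted ℱ b) (hc_adapted : Adapted ℱ c)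
    (hv_int : ∀ n, Integrable (v n) μ)
    (hb_int : ∀ n, Integrable (b n) μ) (hc_int : ∀ n, Integrable (c n) μ)
    (hineq : ∀ n, μ[v (n + 1) | ℱ n] ≤ᵐ[μ] fun ω => v n ω * (1 + a n ω) + b n ω - c n ω)
    (ha_sum : ∀ᵐ ω ∂μ, Summable (fun n => a n ω))
    (hb_sum : ∀ᵐ ω ∂μ, Summable (fun n => b n ω)) :
    ∀ᵐ ω ∂μ, (∃ l : ℝ, Tendsto (fun n => v n ω) atTop (nhds l)) ∧
      Summable (fun n => c n ω) := by
  have h_nonneg : ∀ᵐ ω ∂μ, ∀ n, 0 ≤ v n ω ∧ 0 ≤ c n ω :=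
    ae_all_iff.2 fun n => (hv_nonneg n).and (hc_nonneg n)
  have hu := supermartingale_normalized hv_adapted ha_adapted hb_adapted hc_adapted hv_int hb_int
    hc_int hv_nonneg hineq
  have hconv := hu.ae_exists_tendsto_of_bddAbove (B := fun n ω => discountedSum (a · ω) (b · ω) n)
    (fun n => measurable_discountedSum ha_adapted hb_adapted le_rfl)
    (by ext; simp [discountedSum]) fun n => by
      filter_upwards [h_nonneg] with ω hω
      exact neg_discountedSum_le_normalized (hω n).1 fun k => (hω k).2
  filter_upwards [hconv, ha_sum, hb_sum, h_nonneg] with ω hω ha hb hω_nonneg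
  obtain ⟨l, hl⟩ := hω (tendsto_discountedSum (summable_div_discount hb)).bddAbove_range
  exact exists_tendsto_and_summable_of_tendsto_normalized (fun n => (hω_nonneg n).1)
    (fun n => (hω_nonneg n).2) ha hb hl

/-- Robbins–Siegmund lemma: for a filtration `ℱ` and nonnegative adapted random
variables `v, a, b, c` with `E[v_{n+1} | ℱ_n] ≤ v_n (1 + a_n) + b_n − c_n` and
`∑ a_n < ∞`, `∑ b_n < ∞` a.s., almost surely `v_n` converges and `∑ c_n < ∞`. -/
theorem stmt2 {Ω : Type*} {m : MeasurableSpace Ω} {μ : Measure Ω} [IsProbabilityMeasure μ]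
    (ℱ : Filtration ℕ m) (v a b c : ℕ → Ω → ℝ)
    (hv_nonneg : ∀ n, 0 ≤ᵐ[μ] v n) (ha_nonneg : ∀ n, 0 ≤ᵐ[μ] a n)
    (hb_nonneg : ∀ n, 0 ≤ᵐ[μ] b n) (hc_nonneg : ∀ n, 0 ≤ᵐ[μ] c n)
    (hv_adapted : Adapted ℱ v) (ha_adapted : Adapted ℱ a)
    (hb_adapted : Adapted ℱ b) (hc_adapted : Adapted ℱ c)
    (hv_int : ∀ n, Integrable (v n) μ) (ha_int : ∀ n, Integrable (a n) μ)
    (hb_int : ∀ n, Integrable (b n) μ) (hc_int : ∀ n, Integrable (c n) μ)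
    (hineq : ∀ n, μ[v (n + 1) | ℱ n] ≤ᵐ[μ] fun ω => v n ω * (1 + a n ω) + b n ω - c n ω)
    (ha_sum : ∀ᵐ ω ∂μ, Summable (fun n => a n ω))
    (hb_sum : ∀ᵐ ω ∂μ, Summable (fun n => b n ω)) :
    ∀ᵐ ω ∂μ, (∃ l : ℝ, Tendsto (fun n => v n ω) atTop (nhds l)) ∧
      Summable (fun n => c n ω) :=
  stmt2_general ℱ v a b c hv_nonneg hc_nonneg hv_adapted ha_adapted hb_adapted hc_adapted hv_int
    hb_int hc_int hineq ha_sum hb_sum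
end

section
/- Let H be a real Hilbert space, a: H × H → ℝ a bounded coercive bilinear form, and b, b_n bounded linear functionals with b_n → b in operator norm. Let p_n solve a_n(p_n, φ) = b_n(φ) for all φ, where a_n are bilinear forms converging to a in the sense that |a_n(φ,ψ) − a(φ,ψ)| ≤ ε_n‖φ‖‖ψ‖ with ε_n → 0, and suppose ‖p_n‖ ≤ R uniformly and p_n ⇀ w weakly. Then a(w, φ) = b(φ) for all φ ∈ H; in particular, if the problem a(p,φ) = b(φ) has a unique solution p, then w = p. -/
/-!
Passing to the limit in `a_n(p_n, φ) = b_n(φ)`: since `v ↦ a(v, φ)` is a bounded functional, it is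
represented by a vector (Riesz), so weak convergence gives `a(p_n, φ) → a(w, φ)`; the uniform bound
`‖p_n‖ ≤ R` makes the error `a_n(p_n, φ) - a(p_n, φ)` at most `|ε_n| R ‖φ‖`, and `b_n(φ) → b(φ)`.
Uniqueness of the limit identifies `a(w, φ)` with `b(φ)`; coercivity then forces any other solution
`p'` to satisfy `k ‖w - p'‖² ≤ a(w - p', w - p') = 0`.
-/

open Filter Topology

theorem tendsto_apply_of_forall_tendsto_inner {H ι : Type*} [NormedAddCommGroup H]
    [InnerProductSpace ℝ H] [CompleteSpace H] {l : Filter ι} (f : H →L[ℝ] ℝ) {p : ι → H} {w : H}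
    (hweak : ∀ x : H, Tendsto (fun n => inner ℝ (p n) x) l (𝓝 (inner ℝ w x))) :
    Tendsto (fun n => f (p n)) l (𝓝 (f w)) := by
  have hf : ∀ v, f v = inner ℝ v ((InnerProductSpace.toDual ℝ H).symm f) := fun v => by
    rw [real_inner_comm, InnerProductSpace.toDual_symm_apply]
  simpa only [hf] using hweak _

theorem tendsto_zero_of_abs_le_mul {ι : Type*} {l : Filter ι} {u ε : ι → ℝ} {C : ℝ}
    (hε : Tendsto ε l (𝓝 0)) (hu : ∀ n, |u n| ≤ ε n * C) : Tendsto u l (𝓝 0) :=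
  squeeze_zero_norm hu (by simpa using hε.mul_const C)

theorem ContinuousLinearMap.tendsto_apply_of_tendsto_norm_sub {E F ι : Type*}
    [SeminormedAddCommGroup E] [NormedSpace ℝ E] [SeminormedAddCommGroup F] [NormedSpace ℝ F]
    {l : Filter ι} {f : ι → E →L[ℝ] F} {g : E →L[ℝ] F}
    (hf : Tendsto (fun n => ‖f n - g‖) l (𝓝 0)) (x : E) :
    Tendsto (fun n => f n x) l (𝓝 (g x)) :=
  ((ContinuousLinearMap.apply ℝ F x).continuous.tendsto g).comp
    (tendsto_iff_norm_sub_tendsto_zero.2 hf)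

theorem eq_of_coercive_of_forall_apply_eq {E : Type*} [NormedAddCommGroup E] [NormedSpace ℝ E]
    (a : E →L[ℝ] E →L[ℝ] ℝ) {k : ℝ} (hk : 0 < k) (hcoer : ∀ v : E, k * ‖v‖ ^ 2 ≤ a v v)
    {u v : E} (huv : ∀ φ : E, a u φ = a v φ) : u = v := by
  have hzero : a (u - v) (u - v) = 0 := by
    rw [map_sub a, sub_apply, huv, sub_self]
  have hsq : ‖u - v‖ ^ 2 = 0 :=
    le_antisymm (by nlinarith [hcoer (u - v)]) (sq_nonneg _)
  exact sub_eq_zero.1 (norm_eq_zero.1 (pow_eq_zero_iff two_ne_zero |>.1 hsq))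

/-- Identification of the weak limit of the averaged adjoint states: if
`a_n → a` uniformly on bounded sets, `b_n → b` in operator norm, `p_n` solves
`a_n(p_n,φ) = b_n(φ)`, `‖p_n‖ ≤ R` and `p_n ⇀ w`, then `a(w,φ) = b(φ)` for all
`φ`; in particular `w` coincides with any solution of the limit problem (which
is unique by coercivity of `a`). -/
theorem stmt13 {H : Type*} [NormedAddCommGroup H] [InnerProductSpace ℝ H]
    [CompleteSpace H]
    (a : H →L[ℝ] H →L[ℝ] ℝ) (aN : ℕ → H → H → ℝ)
    (b : H →L[ℝ] ℝ) (bN : ℕ → H →L[ℝ] ℝ)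
    (k : ℝ) (hk : 0 < k) (hcoer : ∀ v : H, k * ‖v‖ ^ 2 ≤ a v v)
    (ε : ℕ → ℝ) (hε : Filter.Tendsto ε Filter.atTop (nhds 0))
    (haN : ∀ n (φ ψ : H), |aN n φ ψ - a φ ψ| ≤ ε n * ‖φ‖ * ‖ψ‖)
    (hbN : Filter.Tendsto (fun n => ‖bN n - b‖) Filter.atTop (nhds 0))
    (p : ℕ → H) (R : ℝ) (hpR : ∀ n, ‖p n‖ ≤ R)
    (hsol : ∀ n (φ : H), aN n (p n) φ = bN n φ)
    (w : H)
    (hweak : ∀ x : H, Filter.Tendsto (fun n => (inner ℝ (p n) x : ℝ))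
      Filter.atTop (nhds (inner ℝ w x))) :
    (∀ φ : H, a w φ = b φ) ∧ ∀ p' : H, (∀ φ : H, a p' φ = b φ) → w = p' := by
  have hlim : ∀ φ : H, a w φ = b φ := by
    intro φ
    have hA : Tendsto (fun n => a (p n) φ) atTop (𝓝 (a w φ)) :=
      tendsto_apply_of_forall_tendsto_inner (a.flip φ) hweak
    have hpert : Tendsto (fun n => aN n (p n) φ - a (p n) φ) atTop (𝓝 0) := by
      refine tendsto_zero_of_abs_le_mul (C := R * ‖φ‖) (by simpa using hε.abs)
        fun n => (haN n (p n) φ).trans ?_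
      rw [mul_assoc]
      exact mul_le_mul (le_abs_self _) (by gcongr; exact hpR n) (by positivity) (abs_nonneg _)
    refine tendsto_nhds_unique ?_ (ContinuousLinearMap.tendsto_apply_of_tendsto_norm_sub hbN φ)
    simpa only [hsol, sub_add_cancel, zero_add] using hpert.add hA
  exact ⟨hlim, fun p' hp' =>
    eq_of_coercive_of_forall_apply_eq a hk hcoer fun φ => (hlim φ).trans (hp' φ).symm⟩
end
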